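/- Let α > 0 satisfy the boundary condition [α - (1-p)e^{γ(C+L)}]·(K₁λ₁^{B-τ+1} + K₂λ₂^{B-τ+1}) = p·e^{γ(C-R)}·(K₁λ₁^{B-τ} + K₂λ₂^{B-τ}), where λ₁, λ₂ are the roots of (1-p)λ² - αe^{-γC}λ + pe^{-γR} = 0, and K₁ = α^{τ-1}(α-λ₂)/(λ₁-λ₂), K₂ = α^{τ-1}(λ₁-α)/(λ₁-λ₂), with λ₁ ≠ λ₂. Then the function V defined by V(i) = α^i for 0 ≤ i ≤ τ and V(τ-1+i) = K₁λ₁^i + K₂λ₂^i for 1 ≤ i ≤ B-τ+1 satisfies all B+1 Bellman equations: α·V(i) = V(i+1) for 0 ≤ i ≤ τ-1; α·V(i) = e^{γC}(p·e^{-γR}V(i-1) + (1-p)V(i+1)) for τ ≤ i ≤ B-1; and α·V(B) = e^{γC}(p·e^{-γR}V(B-1) + (1-p)e^{γL}V(B)). -/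
import Mathlib


/-- the closed-form value function satisfies all B+1 Bellman equations
of the threshold policy π_τ. -/
theorem stmt_13 (B τ : ℕ) (hB : 2 ≤ B) (hτ1 : 1 ≤ τ) (hτB : τ ≤ B - 1)
    (γ C R L p α : ℝ) (hγ : 0 < γ) (hC : 0 < C) (hR : 0 < R) (hL : 0 < L)
    (hp : 0 < p) (hp1 : p < 1) (hα : 0 < α)
    (lam₁ lam₂ : ℝ) (hne : lam₁ ≠ lam₂)
    (hroot₁ : (1 - p) * lam₁ ^ 2 - α * Real.exp (-γ * C) * lam₁ + p * Real.exp (-γ * R) = 0)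
    (hroot₂ : (1 - p) * lam₂ ^ 2 - α * Real.exp (-γ * C) * lam₂ + p * Real.exp (-γ * R) = 0)
    (K₁ K₂ : ℝ)
    (hK₁ : K₁ = α ^ (τ - 1) * (α - lam₂) / (lam₁ - lam₂))
    (hK₂ : K₂ = α ^ (τ - 1) * (lam₁ - α) / (lam₁ - lam₂))
    (hbound : (α - (1 - p) * Real.exp (γ * (C + L)))
        * (K₁ * lam₁ ^ (B - τ + 1) + K₂ * lam₂ ^ (B - τ + 1))
      = p * Real.exp (γ * (C - R)) * (K₁ * lam₁ ^ (B - τ) + K₂ * lam₂ ^ (B - τ)))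
    (V : ℕ → ℝ)
    (hVlow : ∀ i, i ≤ τ → V i = α ^ i)
    (hVhigh : ∀ i, 1 ≤ i → i ≤ B - τ + 1 → V (τ - 1 + i) = K₁ * lam₁ ^ i + K₂ * lam₂ ^ i) :
    (∀ i, i ≤ τ - 1 → α * V i = V (i + 1)) ∧
    (∀ i, τ ≤ i → i ≤ B - 1 →
      α * V i = Real.exp (γ * C) * (p * Real.exp (-γ * R) * V (i - 1) + (1 - p) * V (i + 1))) ∧
    α * V B = Real.exp (γ * C)
      * (p * Real.exp (-γ * R) * V (B - 1) + (1 - p) * Real.exp (γ * L) * V B) := by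
  have hsub : lam₁ - lam₂ ≠ 0 := sub_ne_zero.mpr hne
  -- extended closed form, valid also at k = 0
  have hV' : ∀ k, k ≤ B - τ + 1 → V (τ - 1 + k) = K₁ * lam₁ ^ k + K₂ * lam₂ ^ k := by
    intro k hk
    rcases Nat.eq_zero_or_pos k with rfl | hk1
    · rw [Nat.add_zero, hVlow (τ - 1) (Nat.sub_le _ _), pow_zero, pow_zero, hK₁, hK₂]
      field_simp
      ring
    · exact hVhigh k hk1 hk
  -- key algebraic identity from the root equation
  have key : ∀ lam : ℝ,
      ((1 - p) * lam ^ 2 - α * Real.exp (-γ * C) * lam + p * Real.exp (-γ * R) = 0) →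
      ∀ j, 1 ≤ j → α * lam ^ j
        = Real.exp (γ * C) * (p * Real.exp (-γ * R) * lam ^ (j - 1) + (1 - p) * lam ^ (j + 1)) := by
    intro lam hroot j hj
    obtain ⟨k, rfl⟩ := Nat.exists_eq_add_of_le hj
    have he : Real.exp (γ * C) * Real.exp (-γ * C) = 1 := by
      rw [← Real.exp_add, show γ * C + -γ * C = 0 by ring, Real.exp_zero]
    rw [show 1 + k - 1 = k from by omega]
    linear_combination (-(Real.exp (γ * C)) * lam ^ k) * hroot - α * lam ^ (1 + k) * he
  refine ⟨?_, ?_, ?_⟩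
  · intro i hi
    rw [hVlow i (by omega), hVlow (i + 1) (by omega), pow_succ]
    ring
  · intro i h1 h2
    obtain ⟨j, hj1, hjB, hij⟩ : ∃ j, 1 ≤ j ∧ j ≤ B - τ ∧ i = τ - 1 + j :=
      ⟨i - τ + 1, by omega, by omega, by omega⟩
    have e1 : V i = K₁ * lam₁ ^ j + K₂ * lam₂ ^ j := by
      rw [hij]; exact hV' j (by omega)
    have e2 : V (i + 1) = K₁ * lam₁ ^ (j + 1) + K₂ * lam₂ ^ (j + 1) := by
      rw [show i + 1 = τ - 1 + (j + 1) from by omega]; exact hV' _ (by omega)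
    have e3 : V (i - 1) = K₁ * lam₁ ^ (j - 1) + K₂ * lam₂ ^ (j - 1) := by
      rw [show i - 1 = τ - 1 + (j - 1) from by omega]; exact hV' _ (by omega)
    rw [e1, e2, e3]
    have k1 := key lam₁ hroot₁ j hj1
    have k2 := key lam₂ hroot₂ j hj1
    linear_combination K₁ * k1 + K₂ * k2
  · have hVB : V B = K₁ * lam₁ ^ (B - τ + 1) + K₂ * lam₂ ^ (B - τ + 1) := by
      have h := hV' (B - τ + 1) le_rfl
      rwa [show τ - 1 + (B - τ + 1) = B from by omega] at h
    have hVB1 : V (B - 1) = K₁ * lam₁ ^ (B - τ) + K₂ * lam₂ ^ (B - τ) := by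
      have h := hV' (B - τ) (by omega)
      rwa [show τ - 1 + (B - τ) = B - 1 from by omega] at h
    have he1 : Real.exp (γ * (C + L)) = Real.exp (γ * C) * Real.exp (γ * L) := by
      rw [← Real.exp_add]; congr 1; ring
    have he2 : Real.exp (γ * (C - R)) = Real.exp (γ * C) * Real.exp (-γ * R) := by
      rw [← Real.exp_add]; congr 1; ring
    rw [he1, he2] at hbound
    rw [hVB, hVB1]
    linear_combination hbound
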